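/- Under the Lazy Set axioms A0–A2, for every Op¹ event x there is no Op⁰ event y with kval(y) = kval(x) and γ(x) < y < x. -/

import Mathlib

/-- Event type: Add, Rem, or Contains. -/
inductive EType | add | rem | cnt
deriving DecidableEq

/-- Status of an event: 0, 1, or f (failed). -/
inductive Status | s0 | s1 | sf
deriving DecidableEq

open EType Status

/-- A Tarskian system execution satisfying the Lazy Set axioms A0–A2.
Events are typed Add/Rem/Cnt; Add and Rem events are actions (with
Begin(E) = End(E) = E) and the actions are linearly ordered by the temporal
precedence relation `lt`; Cnt events are high-level with Begin(E) < End(E);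
`γ` is defined on the Op¹ events and satisfies axioms A1 and A2. -/
structure LazySys where
  E : Type
  lt : E → E → Prop
  typ : E → EType
  χ : E → Status
  kval : E → ℕ
  Begin : E → E
  End' : E → E
  γ : E → E
  action : E → Prop
  lt_irrefl : ∀ e, ¬ lt e e
  lt_trans : ∀ a b c, lt a b → lt b c → lt a c
  act_lin : ∀ a b, action a → action b → a ≠ b → lt a b ∨ lt b a
  addRem_action : ∀ e, typ e ≠ EType.cnt →
    action e ∧ Begin e = e ∧ End' e = e
  begin_end_action : ∀ e, action (Begin e) ∧ action (End' e)
  cnt_interval : ∀ e, typ e = EType.cnt → lt (Begin e) (End' e)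
  lt_iff : ∀ a b, lt a b ↔ lt (End' a) (Begin b)
  A1 : ∀ A, χ A = Status.s1 →
    typ (γ A) = EType.add ∧ χ (γ A) = Status.s0 ∧ kval (γ A) = kval A ∧
    lt (γ A) (End' A) ∧
    ¬ ∃ R, typ R = EType.rem ∧ χ R = Status.s1 ∧ γ R = γ A ∧
      lt (γ A) R ∧ lt R A
  A2 : ∀ A B, typ A = EType.add → χ A = Status.s0 → χ B = Status.s0 →
    lt A B → kval A = kval B →
    ∃ R, typ R = EType.rem ∧ χ R = Status.s1 ∧ γ R = A ∧ lt R (End' B)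

/-- The auxiliary relation ⇒ used in the linearization proof. -/
def LazySys.arrow (S : LazySys) (X Y : S.E) : Prop :=
  (S.typ Y = EType.cnt ∧ S.χ Y = Status.s1 ∧ X = S.γ Y) ∨
  (S.typ X = EType.cnt ∧ S.χ X = Status.s1 ∧
    S.typ Y = EType.rem ∧ S.χ Y = Status.s1 ∧ S.γ Y = S.γ X) ∨
  (S.typ X = EType.rem ∧ S.χ X = Status.s1 ∧
    S.typ Y = EType.cnt ∧ S.χ Y = Status.s0 ∧
    S.kval X = S.kval Y ∧ ¬ S.lt Y X ∧ S.lt (S.γ X) Y) ∨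
  (S.typ X = EType.cnt ∧ S.χ X = Status.s0 ∧
    S.typ Y = EType.add ∧ S.χ Y = Status.s0 ∧
    S.kval X = S.kval Y ∧ ¬ S.lt Y X)

/-! The Rem¹ event that A2 supplies for the Add γ(x) and the Op⁰ event y lies after γ(x) (by A1
for that Rem) and before x (it precedes the end of y); A1 for x forbids exactly such an event. -/

namespace LazySys

variable (S : LazySys)

theorem end_eq_self {e : S.E} (h : S.typ e ≠ cnt) : S.End' e = e :=
  (S.addRem_action e h).2.2

theorem lt_of_end_lt_end_of_lt {a b c : S.E} (hab : S.lt (S.End' a) (S.End' b))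
    (hbc : S.lt b c) : S.lt a c :=
  (S.lt_iff a c).2 (S.lt_trans _ _ _ hab ((S.lt_iff b c).1 hbc))

theorem gamma_lt_of_rem {R : S.E} (ht : S.typ R = rem) (hs : S.χ R = s1) :
    S.lt (S.γ R) R := by
  simpa only [S.end_eq_self (ht ▸ nofun : S.typ R ≠ cnt)] using (S.A1 R hs).2.2.2.1

end LazySys

/-- Under the Lazy Set axioms A0–A2, for every Op¹ event x there
is no Op⁰ event y with kval(y) = kval(x) and γ(x) < y < x. -/
theorem stmt5 (S : LazySys) :
    ∀ x : S.E, S.χ x = s1 →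
      ¬ ∃ y : S.E, S.χ y = s0 ∧ S.kval y = S.kval x ∧
        S.lt (S.γ x) y ∧ S.lt y x := by
  rintro x hx ⟨y, hy, hky, hγy, hyx⟩
  obtain ⟨hadd, hs0, hkval, -, hno⟩ := S.A1 x hx
  obtain ⟨R, hRt, hRs, hRγ, hRy⟩ := S.A2 _ y hadd hs0 hy hγy (hkval.trans hky.symm)
  have hγR : S.lt (S.γ x) R := hRγ ▸ S.gamma_lt_of_rem hRt hRs
  have hRx : S.lt R x := by
    refine S.lt_of_end_lt_end_of_lt ?_ hyx
    rwa [S.end_eq_self (hRt ▸ nofun : S.typ R ≠ cnt)]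
  exact hno ⟨R, hRt, hRs, hRγ, hγR, hRx⟩
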